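/- Let p > 3 be a prime and let A be an 𝔽_p-brace of cardinality p^4 whose multiplicative group (A,∘) is the group XV, with generators P, Q, R, S ∈ A satisfying the XV relations. Then P ∈ A^3, P*A^i ⊆ A^{i+3} for all i ≥ 1, and consequently P*P = 0, Q*P = 0, P*Q = 0, a*P = P*a ∈ A^4 for all a ∈ A, and P*A^2 = A^2*P = 0. -/

import Mathlib

/-- A left brace: `(A, +)` an abelian group, `(A, *)` a group (we write the brace
multiplication `∘` as `*`), with `a * (b + c) + a = a * b + a * c`. -/
class LeftBrace (A : Type*) extends Group A, AddCommGroup A where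
  mul_add_eq : ∀ a b c : A, a * (b + c) + a = a * b + a * c

namespace LeftBrace

/-- The star operation `a * b = a∘b - a - b` of a left brace. -/
def star {A : Type*} [LeftBrace A] (a b : A) : A := a * b - a - b

end LeftBrace

/-- An `𝔽ₚ`-brace: a left brace whose additive group is a `ZMod p`-vector space
with `a * (α • b) = α • (a * b)`. -/
class FpBrace (p : ℕ) (A : Type*) extends LeftBrace A, Module (ZMod p) A where
  star_smul' : ∀ (α : ZMod p) (a b : A),
    LeftBrace.star a (α • b) = α • LeftBrace.star a b

/-- The left chain `A^1 = A`, `A^{i+1} = A * A^i` (additive subgroup generated by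
`a * b`, `a ∈ A`, `b ∈ A^i`). -/
def lpow (A : Type*) [LeftBrace A] : ℕ → AddSubgroup A
  | 0 => ⊤
  | 1 => ⊤
  | (n+2) => AddSubgroup.closure
      {x : A | ∃ a : A, ∃ b ∈ lpow A (n+1), x = LeftBrace.star a b}

/-- The right chain `A^{(1)} = A`, `A^{(i+1)} = A^{(i)} * A`. -/
def rpow (A : Type*) [LeftBrace A] : ℕ → AddSubgroup A
  | 0 => ⊤
  | 1 => ⊤
  | (n+2) => AddSubgroup.closure
      {x : A | ∃ a ∈ rpow A (n+1), ∃ b : A, x = LeftBrace.star a b}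

/-- A left brace is right nilpotent if `A^{(n)} = 0` for some `n`. -/
def IsRightNilpotent (A : Type*) [LeftBrace A] : Prop := ∃ n, rpow A n = ⊥

/-- The defining relations of the group XV on generators `P, Q, R, S`. -/
def XVRelations {A : Type*} [LeftBrace A] (p : ℕ) (P Q R S : A) : Prop :=
  Q * S = S * Q * P ∧ Q * R = R * Q ∧ P * S = S * P ∧ P * Q = Q * P ∧
  P * R = R * P ∧ R * S = S * R * Q ∧
  P ^ p = 1 ∧ Q ^ p = 1 ∧ R ^ p = 1 ∧ S ^ p = 1

/-- The multiplicative group of the brace `A` is the group XV, with generators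
`P, Q, R, S` satisfying the XV relations. -/
def IsXVBrace (p : ℕ) (A : Type*) [LeftBrace A] (P Q R S : A) : Prop :=
  Nat.card A = p ^ 4 ∧ Subgroup.closure {P, Q, R, S} = ⊤ ∧ XVRelations p P Q R S


/-- The Multiplicative Table with parameters `y, i, k`. -/
def MultTable {p : ℕ} {A : Type*} [LeftBrace A] [Module (ZMod p) A]
    (P Q R S : A) (y i k : ZMod p) : Prop :=
  LeftBrace.star P P = 0 ∧ LeftBrace.star P Q = 0 ∧
  LeftBrace.star P R = y • S ∧ LeftBrace.star P S = 0 ∧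
  LeftBrace.star Q P = 0 ∧ LeftBrace.star Q Q = -(y • S) ∧
  LeftBrace.star Q R = ((2 : ZMod p)⁻¹ * y) • S ∧ LeftBrace.star Q S = 0 ∧
  LeftBrace.star R P = y • S ∧ LeftBrace.star R Q = ((2 : ZMod p)⁻¹ * y) • S ∧
  LeftBrace.star R R = i • P + k • S ∧ LeftBrace.star R S = 0 ∧
  LeftBrace.star S P = 0 ∧ LeftBrace.star S Q = -P ∧
  LeftBrace.star S R = -Q + P - ((2 : ZMod p)⁻¹ * y) • S ∧ LeftBrace.star S S = 0

/-- Additive subgroup generated by all `x * y`, `x ∈ X`, `y ∈ Y`. -/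
def starSpan {A : Type*} [LeftBrace A] (X Y : AddSubgroup A) : AddSubgroup A :=
  AddSubgroup.closure {z : A | ∃ x ∈ X, ∃ y ∈ Y, z = LeftBrace.star x y}

/-- An ideal of a left brace: an additive subgroup closed under all `λ_a` and
normal in `(A, ∘)`. -/
def IsBraceIdeal {A : Type*} [LeftBrace A] (I : AddSubgroup A) : Prop :=
  (∀ a : A, ∀ b ∈ I, a * b - a ∈ I) ∧ (∀ a : A, ∀ b ∈ I, a * b * a⁻¹ ∈ I)

/-- A brace is prime if the product of any two nonzero ideals is nonzero. -/
def IsPrimeBrace (A : Type*) [LeftBrace A] : Prop :=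
  ∀ I J : AddSubgroup A, IsBraceIdeal I → IsBraceIdeal J → I ≠ ⊥ → J ≠ ⊥ →
    starSpan I J ≠ ⊥

/-- Left chain of a nonassociative algebra given by a bilinear map. -/
def preLieL (R : Type*) [CommRing R] (V : Type*) [AddCommGroup V] [Module R V]
    (mul : V →ₗ[R] V →ₗ[R] V) : ℕ → Submodule R V
  | 0 => ⊤
  | 1 => ⊤
  | (n+2) => Submodule.span R
      {x : V | ∃ a : V, ∃ b ∈ preLieL R V mul (n+1), x = mul a b}

/-- Right chain of a nonassociative algebra given by a bilinear map. -/
def preLieR (R : Type*) [CommRing R] (V : Type*) [AddCommGroup V] [Module R V]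
    (mul : V →ₗ[R] V →ₗ[R] V) : ℕ → Submodule R V
  | 0 => ⊤
  | 1 => ⊤
  | (n+2) => Submodule.span R
      {x : V | ∃ a ∈ preLieR R V mul (n+1), ∃ b : V, x = mul a b}

/-- The defining relations of the group XIV on generators `P, Q, R, S`. -/
def XIVRelations {A : Type*} [LeftBrace A] (p : ℕ) (P Q R S : A) : Prop :=
  Q * P = P * Q ∧ Q * R = R * Q ∧ Q * S = S * Q ∧
  P * R = R * P ∧ P * S = S * P ∧ R * S = S * R * P ∧
  P ^ p = 1 ∧ Q ^ p = 1 ∧ R ^ p = 1 ∧ S ^ p = 1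

/-!
With `λ_a x = a ∘ x - a`, the map `a ↦ λ_a` is a homomorphism `(A, ∘) → End (A, +)` and
`a * x = λ_a x - x`. A relation `a ∘ b = b ∘ a ∘ c` gives `λ_c = λ_{(b∘a)⁻¹} λ_a λ_b`, hence
`c * x = λ_{(b∘a)⁻¹} (a * (b * x) - b * (a * x))` and `c = λ_{(b∘a)⁻¹} (a * b - b * a)`. As every
`Aⁱ` is a left ideal, `R ∘ S = S ∘ R ∘ Q` and `Q ∘ S = S ∘ Q ∘ P` give `Q * Aⁱ ⊆ A^{i+2}`, `Q ∈ A²`,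
`P * Aⁱ ⊆ A^{i+3}` and `P ∈ A³`.

A brace of order `pⁿ` has `A^{n+1} = 0`: if `I ≠ 0` is a left ideal and `J` a maximal left ideal
properly inside `I`, the `p`-group `(A, ∘)` fixes some `x + J ≠ 0` in `I / J`, so `I = J + ℤx` and
`A * I ⊆ J`. Thus the chain `Aⁱ` drops by a factor `p` until it vanishes, and `A⁵ = 0`. Finally `P`
commutes with all generators, so it is central in `(A, ∘)` and `a * P = P * a`.
-/

theorem Nat.Prime.dvd_of_dvd_pow_of_ne_one {p n d : ℕ} (hp : p.Prime) (hd : d ∣ p ^ n)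
    (h1 : d ≠ 1) : p ∣ d := by
  obtain ⟨k, -, rfl⟩ := (Nat.dvd_prime_pow hp).1 hd
  exact dvd_pow_self p (by rintro rfl; exact h1 (pow_zero p))

namespace AddSubgroup

variable {G : Type*} [AddGroup G] {p n : ℕ} {H K : AddSubgroup G}

theorem prime_dvd_relIndex_of_lt (hp : p.Prime) (hG : Nat.card G = p ^ n) (h : H < K) :
    p ∣ H.relIndex K :=
  hp.dvd_of_dvd_pow_of_ne_one
    ((H.relIndex_dvd_card K).trans (hG ▸ K.card_addSubgroup_dvd_card))
    (fun h1 => h.not_ge (relIndex_eq_one.1 h1))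

theorem card_mul_le_card_of_lt [Finite G] (hp : p.Prime) (hG : Nat.card G = p ^ n) (h : H < K) :
    Nat.card H * p ≤ Nat.card K := by
  calc Nat.card H * p ≤ Nat.card H * H.relIndex K :=
        Nat.mul_le_mul_left _ <| Nat.le_of_dvd
          (Nat.pos_of_dvd_of_pos (H.relIndex_dvd_card K) Nat.card_pos)
          (prime_dvd_relIndex_of_lt hp hG h)
    _ = Nat.card K := by
        rw [← relIndex_bot_left, ← relIndex_bot_left, relIndex_mul_relIndex _ _ _ bot_le h.le]

end AddSubgroup

namespace LeftBrace

variable {A : Type*} [LeftBrace A] {p n : ℕ}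

theorem mul_add' (a b c : A) : a * (b + c) = a * b + a * c - a :=
  eq_sub_of_add_eq (mul_add_eq a b c)

theorem mul_zero_eq_self (a : A) : a * 0 = a := by
  have h := mul_add_eq a 0 0
  rw [add_zero] at h
  exact (add_left_cancel h).symm

theorem one_eq_zero : (1 : A) = 0 := by
  simpa using (mul_zero_eq_self (1 : A)).symm

theorem mul_sub' (a b c : A) : a * (b - c) = a * b - a * c + a := by
  have h := mul_add' a (b - c) c
  rw [sub_add_cancel] at h
  rw [h]; abel

def lam : A →* AddMonoid.End A where
  toFun a :=
    { toFun := fun x => a * x - a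
      map_zero' := by simp only [mul_zero_eq_self, sub_self]
      map_add' := fun x y => by simp only [mul_add']; abel }
  map_one' := by
    ext x
    show 1 * x - 1 = x
    rw [one_mul, one_eq_zero, sub_zero]
  map_mul' a b := by
    ext x
    show a * b * x - a * b = a * (b * x - b) - a
    rw [mul_sub', mul_assoc]; abel

theorem lam_apply (a x : A) : lam a x = a * x - a := rfl

theorem lam_inv_lam (a x : A) : lam a⁻¹ (lam a x) = x := by
  show (lam a⁻¹ * lam a) x = x
  rw [← map_mul, inv_mul_cancel, map_one]; rfl

theorem star_eq_lam_sub (a x : A) : star a x = lam a x - x := rfl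

theorem lam_eq_star_add (a x : A) : lam a x = star a x + x := (sub_add_cancel _ _).symm

def starEnd (a : A) : AddMonoid.End A := lam a - 1

theorem star_add (a x y : A) : star a (x + y) = star a x + star a y :=
  map_add (starEnd a) x y

theorem star_zsmul (a x : A) (n : ℤ) : star a (n • x) = n • star a x :=
  map_zsmul (starEnd a) n x

theorem mul_eq_add_add_star (a b : A) : a * b = a + b + star a b := by
  rw [star]; abel

theorem star_comm_of_commute {a b : A} (h : a * b = b * a) : star a b = star b a := by
  simp only [star, h]; abel

theorem eq_lam_of_mul_eq {a b c : A} (h : a * b = b * a * c) :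
    c = lam (b * a)⁻¹ (star a b - star b a) := by
  have hc : lam (b * a) c = star a b - star b a := by
    rw [lam_apply, ← h, mul_eq_add_add_star a b, mul_eq_add_add_star b a]; abel
  rw [← hc, lam_inv_lam]

theorem star_eq_lam_of_mul_eq {a b c : A} (h : a * b = b * a * c) (x : A) :
    star c x = lam (b * a)⁻¹ (star a (star b x) - star b (star a x)) := by
  set L := lam (b * a)⁻¹
  have hL : L * (lam b * lam a) = 1 := by rw [← map_mul, ← map_mul, inv_mul_cancel, map_one]
  have hc : starEnd c = L * (starEnd a * starEnd b - starEnd b * starEnd a) :=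
    calc starEnd c = L * (lam a * lam b) - L * (lam b * lam a) := by
          rw [starEnd, hL, show c = (b * a)⁻¹ * (a * b) by rw [h]; group, map_mul, map_mul]
      _ = L * ((starEnd a + 1) * (starEnd b + 1) - (starEnd b + 1) * (starEnd a + 1)) := by
          simp only [starEnd, sub_add_cancel, mul_sub]
      _ = L * (starEnd a * starEnd b - starEnd b * starEnd a) := by noncomm_ring
  exact congrArg (· x) hc

def IsLeftIdeal (I : AddSubgroup A) : Prop := ∀ a, ∀ x ∈ I, lam a x ∈ I

theorem isLeftIdeal_iff_star_mem {I : AddSubgroup A} :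
    IsLeftIdeal I ↔ ∀ a, ∀ x ∈ I, star a x ∈ I := by
  refine forall_congr' fun a => forall₂_congr fun x hx => ?_
  rw [lam_eq_star_add, add_mem_cancel_right hx]

theorem starSpan_mono {X X' Y Y' : AddSubgroup A} (hX : X ≤ X') (hY : Y ≤ Y') :
    starSpan X Y ≤ starSpan X' Y' :=
  AddSubgroup.closure_mono fun _ ⟨x, hx, y, hy, h⟩ => ⟨x, hX hx, y, hY hy, h⟩

theorem star_mem_starSpan {X Y : AddSubgroup A} {x y : A} (hx : x ∈ X) (hy : y ∈ Y) :
    star x y ∈ starSpan X Y :=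
  AddSubgroup.subset_closure ⟨x, hx, y, hy, rfl⟩

theorem mem_lpow_one (x : A) : x ∈ lpow A 1 := AddSubgroup.mem_top x

theorem lpow_add_two (n : ℕ) :
    lpow A (n + 2) = starSpan ⊤ (lpow A (n + 1)) := by
  simp only [lpow, starSpan, AddSubgroup.mem_top, true_and]

theorem lpow_succ_le (n : ℕ) : lpow A (n + 1) ≤ lpow A n := by
  induction n with
  | zero => exact le_top
  | succ n ih =>
    cases n with
    | zero => exact le_top
    | succ n => simpa only [lpow_add_two] using starSpan_mono le_rfl ih

theorem antitone_lpow : Antitone (lpow A) := antitone_nat_of_succ_le lpow_succ_le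

theorem star_mem_lpow_succ (a : A) {n : ℕ} {x : A} (hx : x ∈ lpow A n) :
    star a x ∈ lpow A (n + 1) := by
  cases n with
  | zero => exact AddSubgroup.mem_top _
  | succ n => rw [lpow_add_two]; exact star_mem_starSpan trivial hx

theorem isLeftIdeal_lpow (n : ℕ) : IsLeftIdeal (lpow A n) :=
  isLeftIdeal_iff_star_mem.2 fun a _ hx => lpow_succ_le n (star_mem_lpow_succ a hx)

theorem lam_mem_lpow (a : A) {n : ℕ} {x : A} (hx : x ∈ lpow A n) : lam a x ∈ lpow A n :=
  isLeftIdeal_lpow n a x hx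

theorem exists_star_mem_of_lt [hp : Fact p.Prime] (hA : Nat.card A = p ^ n)
    {I J : AddSubgroup A} (hI : IsLeftIdeal I) (hJ : IsLeftIdeal J) (hJI : J < I) :
    ∃ x ∈ I, x ∉ J ∧ ∀ a, star a x ∈ J := by
  have : Finite A := Nat.finite_of_card_ne_zero (by simp [hA, hp.out.ne_zero])
  set J' := J.addSubgroupOf I
  let f (a : A) : I →+ I :=
    { toFun x := ⟨lam a x, hI a x x.2⟩
      map_zero' := Subtype.ext (map_zero _)
      map_add' x y := Subtype.ext (map_add _ _ _) }
  let act (a : A) : I ⧸ J' →+ I ⧸ J' :=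
    QuotientAddGroup.map J' J' (f a) fun x hx => hJ a x hx
  let _ : MulAction A (I ⧸ J') :=
    { smul a q := act a q
      one_smul q := QuotientAddGroup.induction_on q fun x =>
        congrArg _ (Subtype.ext (show lam (1 : A) x = (x : A) by rw [map_one]; rfl))
      mul_smul a b q := QuotientAddGroup.induction_on q fun x =>
        congrArg _ (Subtype.ext (show lam (a * b) (x : A) = lam a (lam b x) by rw [map_mul]; rfl)) }
  have hcard : p ∣ Nat.card (I ⧸ J') :=
    AddSubgroup.prime_dvd_relIndex_of_lt hp.out hA hJI
  obtain ⟨q, hq, hq0⟩ := (IsPGroup.of_card hA).exists_fixed_point_of_prime_dvd_card_of_fixed_point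
    _ hcard (a := 0) fun a => map_zero (act a)
  obtain ⟨x, rfl⟩ := QuotientAddGroup.mk_surjective q
  refine ⟨x, x.2, fun hx => hq0 ((QuotientAddGroup.eq_zero_iff x).2 hx).symm, fun a => ?_⟩
  have hfix : (x : I ⧸ J') = (f a x : I ⧸ J') := (hq a).symm
  rw [star_eq_lam_sub, sub_eq_neg_add]
  exact AddSubgroup.mem_addSubgroupOf.1 (QuotientAddGroup.eq.1 hfix)

theorem starSpan_top_lt [Fact p.Prime] (hA : Nat.card A = p ^ n) {I : AddSubgroup A}
    (hI : IsLeftIdeal I) (hI0 : I ≠ ⊥) : starSpan ⊤ I < I := by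
  have : Finite A := Nat.finite_of_card_ne_zero (by simp [hA, (Fact.out : p.Prime).ne_zero])
  obtain ⟨J, ⟨hJI, hJ⟩, hmax⟩ := Set.Finite.exists_maximal
    (s := {J : AddSubgroup A | J < I ∧ IsLeftIdeal J}) (Set.toFinite _)
    ⟨⊥, bot_lt_iff_ne_bot.2 hI0, fun a x hx => by
      rw [(AddSubgroup.mem_bot.1 hx), map_zero]; exact zero_mem _⟩
  obtain ⟨x, hxI, hxJ, hx⟩ := exists_star_mem_of_lt hA hI hJ hJI
  set J' := J ⊔ AddSubgroup.zmultiples x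
  have hJ' : ∀ a, ∀ y ∈ J', star a y ∈ J := fun a y hy => by
    obtain ⟨j, hj, _, ⟨k, rfl⟩, rfl⟩ := AddSubgroup.mem_sup.1 hy
    rw [star_add, star_zsmul]
    exact J.add_mem (isLeftIdeal_iff_star_mem.1 hJ a j hj) (J.zsmul_mem (hx a) k)
  have hJ'I : J' = I := by
    refine (sup_le hJI.le (AddSubgroup.zmultiples_le.2 hxI)).eq_or_lt.resolve_right
      fun hlt => hxJ (hmax ⟨hlt, ?_⟩ le_sup_left (AddSubgroup.mem_sup_right
        (AddSubgroup.mem_zmultiples x)))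
    exact isLeftIdeal_iff_star_mem.2 fun a y hy => AddSubgroup.mem_sup_left (hJ' a y hy)
  refine lt_of_le_of_lt ((AddSubgroup.closure_le _).2 ?_) hJI
  rintro _ ⟨a, -, y, hy, rfl⟩
  exact hJ' a y (hJ'I ▸ hy)

theorem lpow_succ_eq_bot (hp : p.Prime) (hA : Nat.card A = p ^ n) : lpow A (n + 1) = ⊥ := by
  have : Fact p.Prime := ⟨hp⟩
  have : Finite A := Nat.finite_of_card_ne_zero (by simp [hA, hp.ne_zero])
  have key : ∀ k, lpow A (k + 1) = ⊥ ∨ Nat.card (lpow A (k + 1)) * p ^ k ≤ p ^ n := by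
    intro k
    induction k with
    | zero => exact .inr (by simp [lpow, hA])
    | succ k ih =>
      by_cases h : lpow A (k + 1) = ⊥
      · exact .inl (le_bot_iff.1 (h ▸ lpow_succ_le (k + 1)))
      have hlt : lpow A (k + 2) < lpow A (k + 1) :=
        lpow_add_two (A := A) k ▸ starSpan_top_lt hA (isLeftIdeal_lpow _) h
      refine .inr (calc
        Nat.card (lpow A (k + 2)) * p ^ (k + 1)
            = Nat.card (lpow A (k + 2)) * p * p ^ k := by ring
        _ ≤ Nat.card (lpow A (k + 1)) * p ^ k :=
            Nat.mul_le_mul_right _ (AddSubgroup.card_mul_le_card_of_lt hp hA hlt)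
        _ ≤ p ^ n := ih.resolve_left h)
  refine (key n).elim id fun h => AddSubgroup.eq_bot_of_card_le _ ?_
  exact Nat.le_of_mul_le_mul_right (by simpa using h) (pow_pos hp.pos n)

theorem mem_lpow_of_mul_eq {a b c : A} {n : ℕ} (h : a * b = b * a * c)
    (hab : star a b ∈ lpow A n) (hba : star b a ∈ lpow A n) : c ∈ lpow A n :=
  eq_lam_of_mul_eq h ▸ lam_mem_lpow _ (sub_mem hab hba)

def StarRaisesLpow (a : A) (m : ℕ) : Prop :=
  ∀ i, 1 ≤ i → ∀ x ∈ lpow A i, star a x ∈ lpow A (i + m)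

theorem starRaisesLpow_one (a : A) : StarRaisesLpow a 1 :=
  fun _ _ _ hx => star_mem_lpow_succ a hx

theorem StarRaisesLpow.of_mul_eq {a b c : A} {m k : ℕ} (h : a * b = b * a * c)
    (ha : StarRaisesLpow a m) (hb : StarRaisesLpow b k) : StarRaisesLpow c (m + k) := by
  intro i hi x hx
  rw [star_eq_lam_of_mul_eq h]
  refine lam_mem_lpow _ (sub_mem ?_ ?_)
  · simpa only [add_comm m, add_assoc] using ha _ (by omega) _ (hb i hi x hx)
  · simpa only [add_assoc] using hb _ (by omega) _ (ha i hi x hx)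

end LeftBrace

open LeftBrace in
theorem statement3_general (p : ℕ) (hp : p.Prime) (A : Type*) [FpBrace p A]
    (P Q R S : A) (hXV : IsXVBrace p A P Q R S) :
    P ∈ lpow A 3 ∧
    (∀ i, 1 ≤ i → ∀ x ∈ lpow A i, star P x ∈ lpow A (i + 3)) ∧
    star P P = 0 ∧ star Q P = 0 ∧ star P Q = 0 ∧
    (∀ a : A, star a P = star P a ∧ star P a ∈ lpow A 4) ∧
    (∀ x ∈ lpow A 2, star P x = 0 ∧ star x P = 0) := by
  obtain ⟨hcard, hgen, hQS, -, hPS, hPQ, hPR, hRS, -⟩ := hXV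
  have hQ : StarRaisesLpow Q 2 := (starRaisesLpow_one R).of_mul_eq hRS (starRaisesLpow_one S)
  have hP : StarRaisesLpow P 3 := hQ.of_mul_eq hQS (starRaisesLpow_one S)
  have hQ2 : Q ∈ lpow A 2 := mem_lpow_of_mul_eq hRS
    (star_mem_lpow_succ R (mem_lpow_one S)) (star_mem_lpow_succ S (mem_lpow_one R))
  have hP3 : P ∈ lpow A 3 := mem_lpow_of_mul_eq hQS
    (hQ 1 le_rfl S (mem_lpow_one _)) (star_mem_lpow_succ S hQ2)
  have hA5 : lpow A 5 = ⊥ := lpow_succ_eq_bot hp hcard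
  have hP0 : ∀ x ∈ lpow A 2, star P x = 0 := fun x hx => by
    simpa [hA5] using hP 2 (by omega) x hx
  have hPcentral : ∀ a : A, a * P = P * a := by
    have : Subgroup.closure {P, Q, R, S} ≤ Subgroup.centralizer {P} := by
      simp only [Subgroup.closure_le, Set.insert_subset_iff, Set.singleton_subset_iff,
        SetLike.mem_coe, Subgroup.mem_centralizer_singleton_iff]
      exact ⟨trivial, hPQ.symm, hPR.symm, hPS.symm⟩
    exact fun a => Subgroup.mem_centralizer_singleton_iff.1 (this (hgen ▸ Subgroup.mem_top a))
  have hcomm : ∀ a, star a P = star P a := fun a => star_comm_of_commute (hPcentral a)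
  refine ⟨hP3, hP, hP0 P (antitone_lpow (by omega) hP3), hcomm Q ▸ hP0 Q hQ2, hP0 Q hQ2,
    fun a => ⟨hcomm a, hP 1 le_rfl a (mem_lpow_one _)⟩,
    fun x hx => ⟨hP0 x hx, hcomm x ▸ hP0 x hx⟩⟩

open LeftBrace in
/-- with multiplicative group XV, `P ∈ A³`, `P * Aⁱ ⊆ A^{i+3}`, and the
resulting vanishing statements. -/
theorem statement3 (p : ℕ) (hp : p.Prime) (hp3 : 3 < p) (A : Type*) [FpBrace p A]
    (P Q R S : A) (hXV : IsXVBrace p A P Q R S) :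
    P ∈ lpow A 3 ∧
    (∀ i, 1 ≤ i → ∀ x ∈ lpow A i, star P x ∈ lpow A (i + 3)) ∧
    star P P = 0 ∧ star Q P = 0 ∧ star P Q = 0 ∧
    (∀ a : A, star a P = star P a ∧ star P a ∈ lpow A 4) ∧
    (∀ x ∈ lpow A 2, star P x = 0 ∧ star x P = 0) :=
  statement3_general p hp A P Q R S hXV
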